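/- Marginal value of remote versus local energy for the two-way channel per-slot sum-rate: for h_1, h_2 > 0, σ_1², σ_2² > 0, α_1, α_2 ∈ [0,1], all π_1, π_2 ≥ 0, and all s ≥ 0, it holds that R(π_1 + s, π_2) ≥ R(π_1, π_2 + α_1 s) and R(π_1, π_2 + s) ≥ R(π_1 + α_2 s, π_2). In words, granting a node s units of consumed power yields at least as large a per-slot sum-rate as granting the other node the α-scaled amount it could have received by transfer. -/
import Mathlib


/-- The per-slot sum-rate of the two-way channel with energy cooperation. -/
noncomputable def perSlotRate (h1 h2 s1 s2 a1 a2 : ℝ) (π1 π2 : ℝ) : ℝ :=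
  sSup {r : ℝ | ∃ d1 d2 : ℝ, 0 ≤ d1 ∧ d1 ≤ π1 ∧ 0 ≤ d2 ∧ d2 ≤ π2 ∧
    r = 1/2 * Real.log (1 + h1 * (π1 - d1 + a2 * d2) / s2)
      + 1/2 * Real.log (1 + h2 * (π2 - d2 + a1 * d1) / s1)}

lemma arg_pos {h s x : ℝ} (hh : 0 < h) (hs : 0 < s) (hx : 0 ≤ x) :
    0 < 1 + h * x / s := by
  have : 0 ≤ h * x / s := div_nonneg (mul_nonneg hh.le hx) hs.le
  linarith

lemma rate_bdd (h1 h2 s1 s2 a1 a2 P1 P2 : ℝ)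
    (hh1 : 0 < h1) (hh2 : 0 < h2) (hs1 : 0 < s1) (hs2 : 0 < s2)
    (ha1 : 0 ≤ a1) (ha2 : 0 ≤ a2) :
    BddAbove {r : ℝ | ∃ d1 d2 : ℝ, 0 ≤ d1 ∧ d1 ≤ P1 ∧ 0 ≤ d2 ∧ d2 ≤ P2 ∧
      r = 1/2 * Real.log (1 + h1 * (P1 - d1 + a2 * d2) / s2)
        + 1/2 * Real.log (1 + h2 * (P2 - d2 + a1 * d1) / s1)} := by
  refine ⟨1/2 * Real.log (1 + h1 * (P1 + a2 * P2) / s2)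
      + 1/2 * Real.log (1 + h2 * (P2 + a1 * P1) / s1), ?_⟩
  rintro r ⟨d1, d2, hd10, hd1, hd20, hd2, rfl⟩
  have hx1 : 0 ≤ P1 - d1 + a2 * d2 := by nlinarith
  have hx2 : 0 ≤ P2 - d2 + a1 * d1 := by nlinarith
  have hl1 : Real.log (1 + h1 * (P1 - d1 + a2 * d2) / s2)
      ≤ Real.log (1 + h1 * (P1 + a2 * P2) / s2) := by
    apply Real.log_le_log (arg_pos hh1 hs2 hx1)
    have h : P1 - d1 + a2 * d2 ≤ P1 + a2 * P2 := by nlinarith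
    gcongr
  have hl2 : Real.log (1 + h2 * (P2 - d2 + a1 * d1) / s1)
      ≤ Real.log (1 + h2 * (P2 + a1 * P1) / s1) := by
    apply Real.log_le_log (arg_pos hh2 hs1 hx2)
    have h : P2 - d2 + a1 * d1 ≤ P2 + a1 * P1 := by nlinarith
    gcongr
  linarith

lemma rate_swap (h1 h2 s1 s2 a1 a2 π1 π2 : ℝ) :
    perSlotRate h1 h2 s1 s2 a1 a2 π1 π2 = perSlotRate h2 h1 s2 s1 a2 a1 π2 π1 := by
  unfold perSlotRate
  congr 1
  ext r
  constructor
  · rintro ⟨d1, d2, h10, h11, h20, h21, rfl⟩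
    exact ⟨d2, d1, h20, h21, h10, h11, by ring⟩
  · rintro ⟨d1, d2, h10, h11, h20, h21, rfl⟩
    exact ⟨d2, d1, h20, h21, h10, h11, by ring⟩

lemma rate_mono (h1 h2 s1 s2 a1 a2 π1 π2 s : ℝ)
    (hh1 : 0 < h1) (hh2 : 0 < h2) (hs1 : 0 < s1) (hs2 : 0 < s2)
    (ha1 : a1 ∈ Set.Icc (0:ℝ) 1) (ha2 : a2 ∈ Set.Icc (0:ℝ) 1)
    (hπ1 : 0 ≤ π1) (hπ2 : 0 ≤ π2) (hs : 0 ≤ s) :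
    perSlotRate h1 h2 s1 s2 a1 a2 π1 (π2 + a1 * s)
        ≤ perSlotRate h1 h2 s1 s2 a1 a2 (π1 + s) π2 := by
  obtain ⟨ha10, ha11⟩ := ha1
  obtain ⟨ha20, ha21⟩ := ha2
  unfold perSlotRate
  apply csSup_le
  · exact ⟨_, 0, 0, le_refl 0, hπ1, le_refl 0, by positivity, rfl⟩
  rintro r ⟨d1, d2, hd10, hd1, hd20, hd2, rfl⟩
  have he0 : 0 ≤ d2 - min d2 π2 := by simp
  have has0 : 0 ≤ a1 * s := mul_nonneg ha10 hs
  have heA : d2 - min d2 π2 ≤ a1 * s := by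
    rcases min_cases d2 π2 with ⟨h, _⟩ | ⟨h, _⟩
    · linarith
    · linarith
  have hmin0 : 0 ≤ min d2 π2 := le_min hd20 hπ2
  refine le_trans ?_ (le_csSup
    (rate_bdd h1 h2 s1 s2 a1 a2 (π1 + s) π2 hh1 hh2 hs1 hs2 ha10 ha20)
    ⟨d1 + s - a2 * (d2 - min d2 π2), min d2 π2, ?_, ?_, hmin0, min_le_right _ _, rfl⟩)
  · have harg1 : (π1 + s) - (d1 + s - a2 * (d2 - min d2 π2)) + a2 * min d2 π2
        = π1 - d1 + a2 * d2 := by ring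
    rw [harg1]
    have hX : 0 ≤ π2 + a1 * s - d2 + a1 * d1 := by nlinarith
    have hle : π2 + a1 * s - d2 + a1 * d1
        ≤ π2 - min d2 π2 + a1 * (d1 + s - a2 * (d2 - min d2 π2)) := by
      have h12 : a1 * a2 ≤ 1 := mul_le_one₀ ha11 ha20 ha21
      nlinarith [mul_nonneg (sub_nonneg.2 h12) he0]
    have hargle : 1 + h2 * (π2 + a1 * s - d2 + a1 * d1) / s1
        ≤ 1 + h2 * (π2 - min d2 π2 + a1 * (d1 + s - a2 * (d2 - min d2 π2))) / s1 := by
      gcongr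
    have hlog := Real.log_le_log (arg_pos hh2 hs1 hX) hargle
    linarith
  · nlinarith
  · nlinarith

/-- Granting a node `s` units of consumed power yields at least as
large a per-slot sum-rate as granting the other node the α-scaled amount it
could have received by transfer. -/
theorem stmt_8
    (h1 h2 s1 s2 a1 a2 π1 π2 s : ℝ)
    (hh1 : 0 < h1) (hh2 : 0 < h2) (hs1 : 0 < s1) (hs2 : 0 < s2)
    (ha1 : a1 ∈ Set.Icc (0:ℝ) 1) (ha2 : a2 ∈ Set.Icc (0:ℝ) 1)
    (hπ1 : 0 ≤ π1) (hπ2 : 0 ≤ π2) (hs : 0 ≤ s) :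
    perSlotRate h1 h2 s1 s2 a1 a2 π1 (π2 + a1 * s)
        ≤ perSlotRate h1 h2 s1 s2 a1 a2 (π1 + s) π2 ∧
    perSlotRate h1 h2 s1 s2 a1 a2 (π1 + a2 * s) π2
        ≤ perSlotRate h1 h2 s1 s2 a1 a2 π1 (π2 + s) := by
  refine ⟨rate_mono h1 h2 s1 s2 a1 a2 π1 π2 s hh1 hh2 hs1 hs2 ha1 ha2 hπ1 hπ2 hs, ?_⟩
  rw [rate_swap h1 h2 s1 s2 a1 a2 (π1 + a2 * s) π2,
      rate_swap h1 h2 s1 s2 a1 a2 π1 (π2 + s)]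
  exact rate_mono h2 h1 s2 s1 a2 a1 π2 π1 s hh2 hh1 hs2 hs1 ha2 ha1 hπ2 hπ1 hs
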